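/- Quadratic-energy identity for exponential integrators: let M and Q be real d×d matrices with M symmetric (Mᵀ = M) and Q skew-symmetric (Qᵀ = −Q), let h ∈ ℝ and w, x ∈ ℝ^d, and set x' = exp(hQM)·x + h·φ(hQM)·Q·w. Then (1/2)x'ᵀMx' − (1/2)xᵀMx + (x' − x)ᵀw = 0. -/

import Mathlib

open Matrix MeasureTheory

/-- `phi V = ∫₀¹ exp((1-τ)V) dτ`, the integral taken entrywise. -/
noncomputable def phi {d : ℕ} (V : Matrix (Fin d) (Fin d) ℝ) :
    Matrix (Fin d) (Fin d) ℝ :=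
  Matrix.of fun i j => ∫ τ in (0:ℝ)..1, NormedSpace.exp ((1 - τ) • V) i j

/-!
The point `x'` is the time-one value of the solution of `y' = h Q (M y + w)`, `y 0 = x`, written
by variation of constants, and the expression is the increment along it of the Hamiltonian
`½ yᵀ M y + yᵀ w`. The derivative of the Hamiltonian along this flow is `h (M y + w)ᵀ Q (M y + w)`,
which vanishes because `Q` is skew-symmetric.
-/

open NormedSpace

section BanachAlgebra

variable {𝔸 : Type*} [NormedRing 𝔸] [NormedAlgebra ℝ 𝔸] [CompleteSpace 𝔸]

theorem continuous_exp_smul (A : 𝔸) : Continuous fun s : ℝ => exp (s • A) :=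
  continuous_iff_continuousAt.2 fun t => (hasDerivAt_exp_smul_const A t).continuousAt

theorem hasDerivAt_integral_exp_smul (A : 𝔸) (t : ℝ) :
    HasDerivAt (fun u => ∫ s in (0:ℝ)..u, exp (s • A)) (exp (t • A)) t :=
  ((continuous_exp_smul A).integral_hasStrictDerivAt 0 t).hasDerivAt

theorem mul_integral_exp_smul (A : 𝔸) (t : ℝ) :
    A * ∫ s in (0:ℝ)..t, exp (s • A) = exp (t • A) - 1 := by
  have h := (ContinuousLinearMap.mul ℝ 𝔸 A).intervalIntegral_comp_comm
    ((continuous_exp_smul A).intervalIntegrable (μ := volume) 0 t)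
  simp only [ContinuousLinearMap.mul_apply'] at h
  rw [← h]
  simpa using intervalIntegral.integral_eq_sub_of_hasDerivAt
    (fun s _ => hasDerivAt_exp_smul_const' A s)
    ((continuous_const.mul (continuous_exp_smul A)).intervalIntegrable 0 t)

end BanachAlgebra

section VectorCalculus

variable {𝕜 m n : Type*} [NontriviallyNormedField 𝕜] [Fintype n] {t : 𝕜}

theorem HasDerivAt.dotProduct {f g : 𝕜 → n → 𝕜} {f' g' : n → 𝕜}
    (hf : HasDerivAt f f' t) (hg : HasDerivAt g g' t) :
    HasDerivAt (fun s => f s ⬝ᵥ g s) (f' ⬝ᵥ g t + f t ⬝ᵥ g') t := by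
  simp only [_root_.dotProduct, ← Finset.sum_add_distrib]
  exact HasDerivAt.fun_sum fun i _ => (hasDerivAt_pi.1 hf i).mul (hasDerivAt_pi.1 hg i)

theorem HasDerivAt.const_mulVec [Fintype m] (M : Matrix m n 𝕜) {f : 𝕜 → n → 𝕜} {f' : n → 𝕜}
    (hf : HasDerivAt f f' t) : HasDerivAt (fun s => M *ᵥ f s) (M *ᵥ f') t :=
  hasDerivAt_pi.2 fun i => by
    have h := (hasDerivAt_const t (M i)).dotProduct hf
    rw [zero_dotProduct, zero_add] at h
    exact h

attribute [local instance] Matrix.linftyOpNormedAddCommGroup Matrix.linftyOpNormedSpace in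
theorem HasDerivAt.mulVec_const [CompleteSpace 𝕜] [Fintype m] {F : 𝕜 → Matrix m n 𝕜}
    {F' : Matrix m n 𝕜} (hF : HasDerivAt F F' t) (v : n → 𝕜) :
    HasDerivAt (fun s => F s *ᵥ v) (F' *ᵥ v) t := by
  exact ((Matrix.mulVecBilin 𝕜 𝕜).flip v).toContinuousLinearMap.hasFDerivAt.comp_hasDerivAt t hF

end VectorCalculus

section QuadraticForm

variable {n : Type*} [Fintype n]

theorem dotProduct_mulVec_self_eq_zero {Q : Matrix n n ℝ} (hQ : Qᵀ = -Q) (u : n → ℝ) :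
    u ⬝ᵥ Q *ᵥ u = 0 := by
  have h := dotProduct_transpose_mulVec Q u u
  rw [hQ, neg_mulVec, dotProduct_neg] at h
  linarith

noncomputable def quadraticEnergy (M : Matrix n n ℝ) (w y : n → ℝ) : ℝ :=
  (1 / 2 : ℝ) * (y ⬝ᵥ M *ᵥ y) + y ⬝ᵥ w

theorem HasDerivAt.quadraticEnergy {M : Matrix n n ℝ} (hM : Mᵀ = M) (w : n → ℝ)
    {y : ℝ → n → ℝ} {y' : n → ℝ} {t : ℝ} (hy : HasDerivAt y y' t) :
    HasDerivAt (fun s => quadraticEnergy M w (y s)) (y' ⬝ᵥ (M *ᵥ y t + w)) t := by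
  have h := ((hy.dotProduct (hy.const_mulVec M)).const_mul (1 / 2 : ℝ)).add
    (hy.dotProduct (hasDerivAt_const t w))
  refine h.congr_deriv ?_
  rw [← dotProduct_transpose_mulVec M y' (y t), hM, dotProduct_zero, dotProduct_add]
  ring

theorem quadraticEnergy_eq_of_hasDerivAt {M Q : Matrix n n ℝ} (hM : Mᵀ = M) (hQ : Qᵀ = -Q)
    (w : n → ℝ) {y : ℝ → n → ℝ} (hy : ∀ t, HasDerivAt y (Q *ᵥ (M *ᵥ y t + w)) t) (a b : ℝ) :
    quadraticEnergy M w (y a) = quadraticEnergy M w (y b) := by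
  refine is_const_of_deriv_eq_zero (fun t => ((hy t).quadraticEnergy hM w).differentiableAt)
    (fun t => ?_) a b
  rw [((hy t).quadraticEnergy hM w).deriv, dotProduct_comm, dotProduct_mulVec_self_eq_zero hQ]

end QuadraticForm

section MatrixExp

-- Matrices carry no global norm; any submultiplicative one makes `exp` differentiable.
attribute [local instance] Matrix.linftyOpNormedRing Matrix.linftyOpNormedAlgebra

variable {n : Type*} [Fintype n] [DecidableEq n]

noncomputable def affineFlow (A : Matrix n n ℝ) (v x : n → ℝ) (t : ℝ) : n → ℝ :=
  exp (t • A) *ᵥ x + (∫ s in (0:ℝ)..t, exp (s • A)) *ᵥ v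

theorem affineFlow_zero (A : Matrix n n ℝ) (v x : n → ℝ) : affineFlow A v x 0 = x := by
  simp [affineFlow]

theorem hasDerivAt_affineFlow (A : Matrix n n ℝ) (v x : n → ℝ) (t : ℝ) :
    HasDerivAt (affineFlow A v x) (A *ᵥ affineFlow A v x t + v) t := by
  have h := ((hasDerivAt_exp_smul_const' A t).mulVec_const x).add
    ((hasDerivAt_integral_exp_smul A t).mulVec_const v)
  refine h.congr_deriv ?_
  rw [affineFlow, mulVec_add, mulVec_mulVec, mulVec_mulVec,
    show A * ∫ s in (0:ℝ)..t, exp (s • A) = exp (t • A) - 1 from mul_integral_exp_smul A t,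
    sub_mulVec, one_mulVec]
  abel

theorem phi_eq_integral_exp_smul {d : ℕ} (V : Matrix (Fin d) (Fin d) ℝ) :
    phi V = ∫ s in (0:ℝ)..1, exp (s • V) := by
  ext i j
  have h := (entryLinearMap ℝ ℝ i j).toContinuousLinearMap.intervalIntegral_comp_comm
    ((continuous_exp_smul V).intervalIntegrable (μ := volume) 0 1)
  have hsub := intervalIntegral.integral_comp_sub_left (fun s => exp (s • V) i j) (1 : ℝ)
    (a := 0) (b := 1)
  simp only [sub_zero, sub_self] at hsub
  rw [phi, of_apply, hsub]
  exact h

theorem affineFlow_one {d : ℕ} (A : Matrix (Fin d) (Fin d) ℝ) (v x : Fin d → ℝ) :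
    affineFlow A v x 1 = exp A *ᵥ x + phi A *ᵥ v := by
  rw [affineFlow, one_smul, phi_eq_integral_exp_smul]

end MatrixExp

theorem stmt_9 {d : ℕ} (M Q : Matrix (Fin d) (Fin d) ℝ)
    (hM : Mᵀ = M) (hQ : Qᵀ = -Q) (h : ℝ) (w x : Fin d → ℝ)
    (x' : Fin d → ℝ)
    (hx' : x' = NormedSpace.exp (h • (Q * M)) *ᵥ x +
        h • (phi (h • (Q * M)) *ᵥ (Q *ᵥ w))) :
    (1/2 : ℝ) * (x' ⬝ᵥ M *ᵥ x') - (1/2 : ℝ) * (x ⬝ᵥ M *ᵥ x) + (x' - x) ⬝ᵥ w = 0 := by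
  have hy : ∀ t, HasDerivAt (affineFlow (h • (Q * M)) (h • (Q *ᵥ w)) x)
      ((h • Q) *ᵥ (M *ᵥ affineFlow (h • (Q * M)) (h • (Q *ᵥ w)) x t + w)) t := fun t => by
    refine (hasDerivAt_affineFlow _ _ x t).congr_deriv ?_
    simp only [mulVec_add, smul_mulVec, mulVec_mulVec, Matrix.smul_mul]
  have hhQ : (h • Q)ᵀ = -(h • Q) := by rw [transpose_smul, hQ, smul_neg]
  have hE := quadraticEnergy_eq_of_hasDerivAt hM hhQ w hy 0 1
  rw [affineFlow_zero, affineFlow_one, mulVec_smul, ← hx', quadraticEnergy, quadraticEnergy] at hE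
  rw [sub_dotProduct]
  linarith
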